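/- arXiv:1101.3833 — 6 statements merged into one kernel-verified Lean document; each statement's English description precedes it below -/
import Mathlib

section
/- Let D be a category that has all pullbacks. Then the Grothendieck twist Tw(D) has all pullbacks. -/
open CategoryTheory CategoryTheory.Limits

universe v u

/-- An object of the Grothendieck twist `Tw(D)`: a finite index type together with a
family of objects of `D`. -/
structure TwObj (D : Type u) [Category.{v} D] : Type (max u 1) where
  ι : Type
  [fin : Finite ι]
  obj : ι → D

attribute [instance] TwObj.fin

/-- A morphism of the Grothendieck twist `Tw(D)`: a function of index types together with
componentwise morphisms of `D`. -/
structure TwHom {D : Type u} [Category.{v} D] (X Y : TwObj D) : Type (max v 1) where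
  toFun : X.ι → Y.ι
  map : ∀ i, X.obj i ⟶ Y.obj (toFun i)

theorem TwHom.hext {D : Type u} [Category.{v} D] {X Y : TwObj D} {f g : TwHom X Y}
    (h1 : f.toFun = g.toFun) (h2 : HEq f.map g.map) : f = g := by
  cases f; cases g; cases h1; cases h2; rfl

instance (D : Type u) [Category.{v} D] : Category (TwObj D) where
  Hom X Y := TwHom X Y
  id X := ⟨id, fun i => 𝟙 _⟩
  comp f g := ⟨g.toFun ∘ f.toFun, fun i => f.map i ≫ g.map (f.toFun i)⟩
  id_comp f := TwHom.hext rfl (heq_of_eq (funext fun i => Category.id_comp _))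
  comp_id f := TwHom.hext rfl (heq_of_eq (funext fun i => Category.comp_id _))
  assoc f g h := TwHom.hext rfl (heq_of_eq (funext fun i => Category.assoc _ _ _))

/-!
The pullback of `f : X ⟶ Z` and `g : Y ⟶ Z` is computed index by index: its index type is the
pullback `{(x, y) // f x = g y}` of the underlying maps of finite types, and over `(x, y)` it
carries the pullback in `D` of `f_x` and `g_y`, after transporting the target of `f_x` along
`f x = g y` by an `eqToHom`.
-/

namespace TwHom

variable {D : Type u} [Category.{v} D] {X Y : TwObj D}

theorem ext {f g : X ⟶ Y} (h : ∀ i, f.toFun i = g.toFun i)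
    (hmap : ∀ i, f.map i ≫ eqToHom (congrArg Y.obj (h i)) = g.map i) : f = g := by
  obtain ⟨φ, a⟩ := f
  obtain ⟨ψ, b⟩ := g
  obtain rfl : φ = ψ := funext h
  simp only [eqToHom_refl, Category.comp_id] at hmap
  rw [funext hmap]

theorem congr_map {f g : X ⟶ Y} (h : f = g) (i : X.ι) :
    f.map i ≫ eqToHom (congrArg Y.obj (congrFun (congrArg TwHom.toFun h) i)) = g.map i := by
  subst h
  simp

end TwHom

namespace TwObj

variable {D : Type u} [Category.{v} D] [HasPullbacks D] {X Y Z : TwObj D}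
  (f : X ⟶ Z) (g : Y ⟶ Z)

noncomputable def pullbackObj : TwObj D where
  ι := Function.Pullback f.toFun g.toFun
  obj p := pullback (f.map p.fst ≫ eqToHom (congrArg Z.obj p.2)) (g.map p.snd)

noncomputable def pullbackFst : pullbackObj f g ⟶ X :=
  ⟨Function.Pullback.fst, fun _ => pullback.fst _ _⟩

noncomputable def pullbackSnd : pullbackObj f g ⟶ Y :=
  ⟨Function.Pullback.snd, fun _ => pullback.snd _ _⟩

theorem pullback_condition : pullbackFst f g ≫ f = pullbackSnd f g ≫ g :=
  TwHom.ext (fun p => p.2) fun _ => (Category.assoc _ _ _).trans pullback.condition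

variable {f g} {W : TwObj D}

noncomputable def pullbackLift (a : W ⟶ X) (b : W ⟶ Y) (h : a ≫ f = b ≫ g) :
    W ⟶ pullbackObj f g where
  toFun w := ⟨(a.toFun w, b.toFun w), congrFun (congrArg TwHom.toFun h) w⟩
  map w := pullback.lift (a.map w) (b.map w) <|
    (Category.assoc _ _ _).symm.trans (TwHom.congr_map h w)

theorem pullbackLift_fst (a : W ⟶ X) (b : W ⟶ Y) (h : a ≫ f = b ≫ g) :
    pullbackLift a b h ≫ pullbackFst f g = a :=
  TwHom.hext rfl (heq_of_eq (funext fun _ => pullback.lift_fst _ _ _))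

theorem pullbackLift_snd (a : W ⟶ X) (b : W ⟶ Y) (h : a ≫ f = b ≫ g) :
    pullbackLift a b h ≫ pullbackSnd f g = b :=
  TwHom.hext rfl (heq_of_eq (funext fun _ => pullback.lift_snd _ _ _))

theorem pullback_hom_ext {u v : W ⟶ pullbackObj f g}
    (h₁ : u ≫ pullbackFst f g = v ≫ pullbackFst f g)
    (h₂ : u ≫ pullbackSnd f g = v ≫ pullbackSnd f g) : u = v := by
  obtain ⟨φ, a⟩ := u
  obtain ⟨ψ, b⟩ := v
  obtain rfl : φ = ψ := funext fun w => Subtype.ext <|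
    Prod.ext (congrFun (congrArg TwHom.toFun h₁) w) (congrFun (congrArg TwHom.toFun h₂) w)
  -- with equal underlying maps, the component families of `h₁` and `h₂` have equal types
  have hfst := eq_of_heq (TwHom.mk.inj h₁).2
  have hsnd := eq_of_heq (TwHom.mk.inj h₂).2
  exact congrArg (TwHom.mk φ) <|
    funext fun w => pullback.hom_ext (congrFun hfst w) (congrFun hsnd w)

variable (f g)

noncomputable def pullbackConeIsLimit :
    IsLimit (PullbackCone.mk (pullbackFst f g) (pullbackSnd f g) (pullback_condition f g)) :=
  PullbackCone.IsLimit.mk _ (fun s => pullbackLift s.fst s.snd s.condition)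
    (fun _ => pullbackLift_fst _ _ _) (fun _ => pullbackLift_snd _ _ _)
    fun _ _ h₁ h₂ => pullback_hom_ext (h₁.trans (pullbackLift_fst _ _ _).symm)
      (h₂.trans (pullbackLift_snd _ _ _).symm)

end TwObj

/-- If `D` has all pullbacks then the Grothendieck twist `Tw(D)` has all pullbacks. -/
theorem tw_hasPullbacks (D : Type u) [Category.{v} D] [HasPullbacks D] :
    HasPullbacks (TwObj D) :=
  have {X Y Z : TwObj D} {f : X ⟶ Z} {g : Y ⟶ Z} : HasLimit (cospan f g) :=
    HasLimit.mk ⟨_, TwObj.pullbackConeIsLimit f g⟩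
  hasPullbacks_of_hasLimit_cospan _
end

section
/- Let D be a category that has all finite connected colimits, i.e., D has colimits of every functor from a finite connected category. Then the Grothendieck twist Tw(D) has all pushouts. -/
/-!
A diagram `F : J ⥤ Tw(D)` has a category of elements `El F`, whose objects are the pairs `(j, a)`
with `a` an index of `F j`, and a diagram `El F ⥤ D` sending `(j, a)` to the `a`-th object of
`F j`. The colimit of `F` is indexed by the connected components of `El F`, with entry at a
component the colimit in `D` of that diagram restricted to the component: a cocone on `F` amounts
to a function on indices that is constant on each component together with a cocone on each
component. For finite `J` every component is a finite connected category, so these colimits exist;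
pushouts are the case `J = WalkingSpan`.
-/

open CategoryTheory CategoryTheory.Limits

universe v u

namespace CategoryTheory

theorem Zigzag.apply_eq_of_forall_hom {C : Type*} [Category C] {α : Sort*} (f : C → α)
    (hf : ∀ ⦃x y : C⦄, (x ⟶ y) → f x = f y) {x y : C} (h : Zigzag x y) : f x = f y := by
  induction h with
  | refl => rfl
  | tail _ hz ih => exact ih.trans (hz.elim (fun ⟨φ⟩ => hf φ) fun ⟨φ⟩ => (hf φ).symm)

section Finiteness

variable {C : Type*} [Category C]

instance finite_elements [Finite C] (G : C ⥤ Type*) [∀ c, Finite (G.obj c)] :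
    Finite G.Elements :=
  inferInstanceAs (Finite (Σ c, G.obj c))

instance finite_elements_hom (G : C ⥤ Type*) (x y : G.Elements) [Finite (x.1 ⟶ y.1)] :
    Finite (x ⟶ y) :=
  Subtype.finite

instance finite_fullSubcategory [Finite C] (P : ObjectProperty C) : Finite P.FullSubcategory :=
  Finite.of_injective _ fun _ _ => ObjectProperty.FullSubcategory.ext

instance finite_fullSubcategory_hom (P : ObjectProperty C) (X Y : P.FullSubcategory)
    [Finite (X.obj ⟶ Y.obj)] : Finite (X ⟶ Y) :=
  Finite.of_injective (β := X.obj ⟶ Y.obj) _ P.ι.map_injective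

instance finite_connectedComponents [Finite C] : Finite (ConnectedComponents C) :=
  Quotient.finite _

noncomputable abbrev finCategoryOfFinite (J : Type) [SmallCategory J] [Finite J]
    [∀ x y : J, Finite (x ⟶ y)] : FinCategory J :=
  ⟨Fintype.ofFinite J, fun _ _ => Fintype.ofFinite _⟩

end Finiteness

end CategoryTheory

namespace TwObj

local notation "π₀" => CategoryTheory.ConnectedComponents

variable {D : Type u} [Category.{v} D]

@[simp]
theorem comp_toFun {X Y Z : TwObj D} (f : X ⟶ Y) (g : Y ⟶ Z) :
    (f ≫ g).toFun = g.toFun ∘ f.toFun := rfl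

@[simp]
theorem comp_map {X Y Z : TwObj D} (f : X ⟶ Y) (g : Y ⟶ Z) (i : X.ι) :
    (f ≫ g).map i = f.map i ≫ g.map (f.toFun i) := rfl

theorem hom_ext {X Y : TwObj D} {f g : X ⟶ Y} (h₁ : ∀ i, f.toFun i = g.toFun i)
    (h₂ : ∀ i, f.map i ≫ eqToHom (congrArg Y.obj (h₁ i)) = g.map i) : f = g := by
  obtain ⟨f₁, f₂⟩ := f
  obtain ⟨g₁, g₂⟩ := g
  obtain rfl : f₁ = g₁ := funext h₁
  obtain rfl : f₂ = g₂ := funext fun i => by simpa using h₂ i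
  rfl

theorem map_comp_eqToHom_of_eq {X Y : TwObj D} {f g : X ⟶ Y} (h : f = g) (i : X.ι) {W : D}
    (p : Y.obj (f.toFun i) = W) (q : Y.obj (g.toFun i) = W) :
    f.map i ≫ eqToHom p = g.map i ≫ eqToHom q := by
  subst h; rfl

theorem map_comp_eqToHom_comp_map {X Y Z : TwObj D} {f : X ⟶ Y} {g : Y ⟶ Z}
    {h : X ⟶ Z} (hfg : f ≫ g = h) {i : X.ι} {i' : Y.ι} (hi : f.toFun i = i') {W : D}
    (p : Z.obj (g.toFun i') = W) (q : Z.obj (h.toFun i) = W) :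
    f.map i ≫ eqToHom (congrArg Y.obj hi) ≫ g.map i' ≫ eqToHom p = h.map i ≫ eqToHom q := by
  subst hfg hi; simp

-- Reducible, so that rewriting sees through `(F ⋙ index).obj j = (F.obj j).ι`.
abbrev index : TwObj D ⥤ Type where
  obj X := X.ι
  map f := ↾f.toFun

section Colimit

variable {J : Type} [SmallCategory J] (F : J ⥤ TwObj D)

def elementsDiagram : (F ⋙ index).Elements ⥤ D where
  obj x := (F.obj x.1).obj x.2
  map {x y} φ := (F.map φ.1).map x.2 ≫ eqToHom (congrArg (F.obj y.1).obj φ.2)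
  map_id x := (map_comp_eqToHom_of_eq (F.map_id x.1) _ _ rfl).trans (Category.comp_id _)
  map_comp {x y z} φ ψ := by
    simp only [Category.assoc]
    exact (map_comp_eqToHom_comp_map (F.map_comp φ.1 ψ.1).symm φ.2 _ _).symm

section Descent

variable {F} (s : Cocone F)

abbrev coconeFun (x : (F ⋙ index).Elements) : s.pt.ι := (s.ι.app x.1).toFun x.2

abbrev coconeMap (x : (F ⋙ index).Elements) :
    (F.obj x.1).obj x.2 ⟶ s.pt.obj (coconeFun s x) :=
  (s.ι.app x.1).map x.2

theorem coconeFun_eq_of_hom {x y : (F ⋙ index).Elements} (φ : x ⟶ y) :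
    coconeFun s x = coconeFun s y := by
  rw [coconeFun, ← s.w φ.1, comp_toFun, Function.comp_apply]
  exact congrArg _ φ.2

theorem coconeMap_w {x y : (F ⋙ index).Elements} (φ : x ⟶ y) {W : D}
    (p : s.pt.obj (coconeFun s y) = W) (q : s.pt.obj (coconeFun s x) = W) :
    (elementsDiagram F).map φ ≫ coconeMap s y ≫ eqToHom p = coconeMap s x ≫ eqToHom q := by
  change ((F.map φ.1).map x.2 ≫ eqToHom _) ≫ _ = _
  rw [Category.assoc]
  exact map_comp_eqToHom_comp_map (s.w φ.1) φ.2 _ _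

def descFun : π₀ (F ⋙ index).Elements → s.pt.ι :=
  Quotient.lift (coconeFun s) fun _ _ =>
    Zigzag.apply_eq_of_forall_hom _ fun _ _ => coconeFun_eq_of_hom s

end Descent

instance finite_comp_index_obj (j : J) : Finite ((F ⋙ index).obj j) := (F.obj j).fin

variable [Finite J]
  [∀ k : π₀ (F ⋙ index).Elements, HasColimit (k.ι ⋙ elementsDiagram F)]

noncomputable abbrev colimitObj : TwObj D where
  ι := π₀ (F ⋙ index).Elements
  obj k := colimit (k.ι ⋙ elementsDiagram F)

noncomputable def colimitι (x : (F ⋙ index).Elements) {k : π₀ (F ⋙ index).Elements}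
    (hx : CategoryTheory.ConnectedComponents.mk x = k) :
    (F.obj x.1).obj x.2 ⟶ (colimitObj F).obj k :=
  colimit.ι (k.ι ⋙ elementsDiagram F) ⟨x, hx⟩

theorem colimitι_w {x y : (F ⋙ index).Elements} (φ : x ⟶ y) {k : π₀ (F ⋙ index).Elements}
    (hx : CategoryTheory.ConnectedComponents.mk x = k)
    (hy : CategoryTheory.ConnectedComponents.mk y = k) :
    (elementsDiagram F).map φ ≫ colimitι F y hy = colimitι F x hx :=
  colimit.w (k.ι ⋙ elementsDiagram F)
    (ObjectProperty.homMk (X := ⟨x, hx⟩) (Y := ⟨y, hy⟩) φ)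

theorem colimitι_comp_eqToHom (x : (F ⋙ index).Elements) {k k' : π₀ (F ⋙ index).Elements}
    (hx : CategoryTheory.ConnectedComponents.mk x = k)
    (hx' : CategoryTheory.ConnectedComponents.mk x = k')
    (p : (colimitObj F).obj k = (colimitObj F).obj k') :
    colimitι F x hx ≫ eqToHom p = colimitι F x hx' := by
  subst hx hx'; simp

noncomputable abbrev colimitInj (j : J) : F.obj j ⟶ colimitObj F where
  toFun a := .mk ((F ⋙ index).elementsMk j a)
  map a := colimitι F ((F ⋙ index).elementsMk j a) rfl

theorem colimitInj_naturality {j j' : J} (φ : j ⟶ j') :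
    F.map φ ≫ colimitInj F j' = colimitInj F j := by
  let φ' (a : (F.obj j).ι) :
      (F ⋙ index).elementsMk j a ⟶ (F ⋙ index).elementsMk j' ((F.map φ).toFun a) :=
    ⟨φ, rfl⟩
  have hk (a : (F.obj j).ι) : CategoryTheory.ConnectedComponents.mk
      ((F ⋙ index).elementsMk j' ((F.map φ).toFun a)) = .mk ((F ⋙ index).elementsMk j a) :=
    Quotient.sound (Zigzag.of_inv (φ' a))
  refine hom_ext hk fun a => ?_
  rw [comp_map, Category.assoc, colimitι_comp_eqToHom F _ rfl (hk a)]
  exact (eq_whisker (Category.comp_id _) _).symm.trans (colimitι_w F (φ' a) rfl (hk a))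

noncomputable def colimitCocone : Cocone F where
  pt := colimitObj F
  ι.app := colimitInj F
  ι.naturality _ _ φ := (colimitInj_naturality F φ).trans (Category.comp_id _).symm

section Desc

variable {F} (s : Cocone F)

noncomputable def descCocone (k : π₀ (F ⋙ index).Elements) :
    Cocone (k.ι ⋙ elementsDiagram F) where
  pt := s.pt.obj (descFun s k)
  ι.app e := coconeMap s e.obj ≫ eqToHom (congrArg s.pt.obj (congrArg (descFun s) e.property))
  ι.naturality _ _ φ := (coconeMap_w s φ.hom _ _).trans (Category.comp_id _).symm

noncomputable def desc : colimitObj F ⟶ s.pt where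
  toFun := descFun s
  map (k : π₀ (F ⋙ index).Elements) := colimit.desc _ (descCocone s k)

theorem colimitι_desc (x : (F ⋙ index).Elements) {k : π₀ (F ⋙ index).Elements}
    (hx : CategoryTheory.ConnectedComponents.mk x = k) {W : D} (p : s.pt.obj (descFun s k) = W)
    (q : s.pt.obj (coconeFun s x) = W) :
    colimitι F x hx ≫ (desc s).map k ≫ eqToHom p = coconeMap s x ≫ eqToHom q := by
  rw [← Category.assoc]
  refine (eq_whisker (colimit.ι_desc (descCocone s k) ⟨x, hx⟩) _).trans ?_
  change (coconeMap s x ≫ eqToHom _) ≫ eqToHom p = _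
  rw [Category.assoc, eqToHom_trans]

theorem colimitInj_desc (j : J) : colimitInj F j ≫ desc s = s.ι.app j :=
  hom_ext (fun _ => rfl) fun _ =>
    (Category.assoc _ _ _).trans ((colimitι_desc s _ rfl _ rfl).trans (Category.comp_id _))

theorem colimitι_comp_map {W : TwObj D} (m : colimitObj F ⟶ W) (x : (F ⋙ index).Elements)
    {k : π₀ (F ⋙ index).Elements} (hx : CategoryTheory.ConnectedComponents.mk x = k) {Z : D}
    (p : W.obj (m.toFun k) = Z) (q : W.obj ((colimitInj F x.1 ≫ m).toFun x.2) = Z) :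
    colimitι F x hx ≫ m.map k ≫ eqToHom p
      = (colimitInj F x.1 ≫ m).map x.2 ≫ eqToHom q := by
  subst hx
  exact (Category.assoc _ _ _).symm

theorem eq_desc (m : colimitObj F ⟶ s.pt) (hm : ∀ j, colimitInj F j ≫ m = s.ι.app j) :
    m = desc s := by
  have h₁ (k : π₀ (F ⋙ index).Elements) : m.toFun k = descFun s k :=
    Quotient.inductionOn k fun x => congrFun (congrArg TwHom.toFun (hm x.1)) x.2
  refine hom_ext h₁ fun k => colimit.hom_ext fun ⟨x, hx⟩ => ?_
  have hk : s.pt.obj (coconeFun s x) = s.pt.obj (descFun s k) :=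
    congrArg s.pt.obj (congrArg (descFun s) hx)
  have hm' : s.pt.obj ((colimitInj F x.1 ≫ m).toFun x.2) = s.pt.obj (descFun s k) :=
    congrArg s.pt.obj ((congrArg m.toFun hx).trans (h₁ k))
  refine (colimitι_comp_map m x hx _ hm').trans
    ((map_comp_eqToHom_of_eq (hm x.1) x.2 _ hk).trans ?_)
  exact (colimitι_desc s x hx rfl hk).symm.trans (congrArg _ (Category.comp_id _))

end Desc

noncomputable def colimitCoconeIsColimit : IsColimit (colimitCocone F) where
  desc := desc
  fac := colimitInj_desc
  uniq s m hm := eq_desc s m hm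

end Colimit

theorem hasColimitsOfShape_of_finCategory (J : Type) [SmallCategory J] [FinCategory J]
    (h : ∀ (K : Type) (_ : SmallCategory K) (_ : FinCategory K) (_ : IsConnected K),
      HasColimitsOfShape K D) :
    HasColimitsOfShape J (TwObj D) where
  has_colimit F :=
    have (k : π₀ (F ⋙ index).Elements) : HasColimit (k.ι ⋙ elementsDiagram F) :=
      have := h k.Component _ (finCategoryOfFinite _) inferInstance
      inferInstance
    HasColimit.mk ⟨_, colimitCoconeIsColimit F⟩

end TwObj

/-- If `D` has all finite connected colimits, then the Grothendieck twist `Tw(D)` has all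
pushouts. -/
theorem tw_hasPushouts_of_finite_connected_colimits (D : Type u) [Category.{v} D]
    (h : ∀ (J : Type) (_ : SmallCategory J) (_ : FinCategory J) (_ : IsConnected J),
      HasColimitsOfShape J D) :
    HasPushouts (TwObj D) :=
  TwObj.hasColimitsOfShape_of_finCategory WalkingSpan h
end

section
/- Let D be a category that has all pushouts. Then for every span (K, c) ← (I, a) → (J, b) in the Grothendieck twist Tw(D) in which the morphism (I, a) → (J, b) has an injective underlying function I → J, the pushout of the span exists in Tw(D). -/
open CategoryTheory CategoryTheory.Limits

universe v u

/-! Because `f` is injective, `B` is isomorphic to an object indexed by `A.ι ⊕ R` on which `f`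
becomes the left inclusion with components `f.map i`. For such a span the pushout can be written
down: its index type is `C.ι ⊕ R`; over `r : R` it is `B` unchanged, and over `k : C.ι` it is the
colimit in `D` of the spans `C.obj k ← A.obj i → B.obj (f i)` for `i` in the fibre of `g` over `k`.
That colimit is the multicoequalizer of a finite star-shaped diagram, built from pushouts by
induction on the size of the fibre. -/

namespace CategoryTheory.Limits

/-- Spans `c ← a s → b s` with common vertex `c = right none`, where `b s = right (some s)`. -/
abbrev MultispanShape.star (S : Type) : MultispanShape where
  L := S
  R := Option S
  fst _ := none
  snd := some

namespace MultispanIndex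

variable {D : Type u} [Category.{v} D] {α β : Type}

abbrev comapStar (I : MultispanIndex (.star β) D) (φ : α → β) : MultispanIndex (.star α) D where
  left a := I.left (φ a)
  right o := I.right (o.map φ)
  fst a := I.fst (φ a)
  snd a := I.snd (φ a)

section

variable [HasPushouts D] (I : MultispanIndex (.star (Option α)) D)
  [HasMulticoequalizer (I.comapStar some)]

noncomputable def starOptionπ :
    ∀ o, I.right o ⟶
      pushout (I.fst none ≫ Multicoequalizer.π (I.comapStar some) none) (I.snd none)
  | none => Multicoequalizer.π (I.comapStar some) none ≫ pushout.inl _ _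
  | some none => pushout.inr _ _
  | some (some a) => Multicoequalizer.π (I.comapStar some) (some a) ≫ pushout.inl _ _

noncomputable def starOptionCofork : Multicofork I :=
  Multicofork.ofπ I _ (starOptionπ I) <| by
    rintro (_ | a)
    · exact (Category.assoc _ _ _).symm.trans pushout.condition
    · exact Multicoequalizer.condition_assoc (I.comapStar some) a _

lemma starOptionπ_hom_ext {W : D} {m₁ m₂ :
      pushout (I.fst none ≫ Multicoequalizer.π (I.comapStar some) none) (I.snd none) ⟶ W}
    (h : ∀ o, starOptionπ I o ≫ m₁ = starOptionπ I o ≫ m₂) : m₁ = m₂ := by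
  refine pushout.hom_ext (Multicoequalizer.hom_ext _ _ _ fun o => ?_) (h (some none))
  rcases o with _ | a
  · simpa [starOptionπ] using h none
  · simpa [starOptionπ] using h (some (some a))

noncomputable def starOptionDesc (E : Multicofork I) :
    pushout (I.fst none ≫ Multicoequalizer.π (I.comapStar some) none) (I.snd none) ⟶ E.pt :=
  pushout.desc
    (Multicoequalizer.desc _ _ (fun o => E.π (o.map some)) fun a => E.condition (some a))
    (E.π (some none)) (by rw [Category.assoc, Multicoequalizer.π_desc]; exact E.condition none)

lemma starOptionπ_desc (E : Multicofork I) (o : Option (Option α)) :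
    starOptionπ I o ≫ starOptionDesc I E = E.π o := by
  rcases o with _ | _ | a
  · dsimp only [starOptionπ, starOptionDesc]
    rw [Category.assoc, pushout.inl_desc, Multicoequalizer.π_desc]
    rfl
  · exact pushout.inr_desc _ _ _
  · dsimp only [starOptionπ, starOptionDesc]
    rw [Category.assoc, pushout.inl_desc, Multicoequalizer.π_desc]
    rfl

noncomputable def isColimitStarOptionCofork : IsColimit (starOptionCofork I) :=
  Multicofork.IsColimit.mk _ (starOptionDesc I) (starOptionπ_desc I) fun E _ hm =>
    starOptionπ_hom_ext I fun o => (hm o).trans (starOptionπ_desc I E o).symm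

end

section

variable (I : MultispanIndex (.star β) D) (e : α ≃ β) [HasMulticoequalizer (I.comapStar e)]

noncomputable def starEquivπ : ∀ o, I.right o ⟶ multicoequalizer (I.comapStar e)
  | none => Multicoequalizer.π (I.comapStar e) none
  | some b => Equiv.piCongrLeft (fun b => I.right (some b) ⟶ multicoequalizer (I.comapStar e)) e
      (fun a => Multicoequalizer.π (I.comapStar e) (some a)) b

lemma starEquivπ_some_apply (a : α) :
    starEquivπ I e (some (e a)) = Multicoequalizer.π (I.comapStar e) (some a) :=
  Equiv.piCongrLeft_apply_apply ..

noncomputable def starEquivCofork : Multicofork I :=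
  Multicofork.ofπ I _ (starEquivπ I e) fun b => by
    obtain ⟨a, rfl⟩ := e.surjective b
    rw [starEquivπ_some_apply]
    exact Multicoequalizer.condition (I.comapStar e) a

lemma starEquivπ_hom_ext {W : D} {m₁ m₂ : multicoequalizer (I.comapStar e) ⟶ W}
    (h : ∀ o, starEquivπ I e o ≫ m₁ = starEquivπ I e o ≫ m₂) : m₁ = m₂ := by
  refine Multicoequalizer.hom_ext _ _ _ fun o => ?_
  rcases o with _ | a
  · exact h none
  · simpa [starEquivπ_some_apply] using h (some (e a))

noncomputable def starEquivDesc (E : Multicofork I) : multicoequalizer (I.comapStar e) ⟶ E.pt :=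
  Multicoequalizer.desc _ _ (fun o => E.π (o.map e)) fun a => E.condition (e a)

lemma starEquivπ_desc (E : Multicofork I) (o : Option β) :
    starEquivπ I e o ≫ starEquivDesc I e E = E.π o := by
  rcases o with _ | b
  · exact Multicoequalizer.π_desc ..
  · obtain ⟨a, rfl⟩ := e.surjective b
    rw [starEquivπ_some_apply]
    exact Multicoequalizer.π_desc ..

noncomputable def isColimitStarEquivCofork : IsColimit (starEquivCofork I e) :=
  Multicofork.IsColimit.mk _ (starEquivDesc I e) (starEquivπ_desc I e) fun E _ hm =>
    starEquivπ_hom_ext I e fun o => (hm o).trans (starEquivπ_desc I e E o).symm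

end

noncomputable def isColimitStarEmpty (I : MultispanIndex (.star PEmpty) D) :
    IsColimit (Multicofork.ofπ I (I.right none) (fun | none => 𝟙 _ | some s => s.elim) (·.elim)) :=
  Multicofork.IsColimit.mk _ (fun E => E.π none)
    (fun | _, none => Category.id_comp _ | _, some s => s.elim)
    fun _ _ hm => (Category.id_comp _).symm.trans (hm none)

theorem hasMulticoequalizer_star [HasPushouts D] {S : Type} [Finite S]
    (I : MultispanIndex (.star S) D) : HasMulticoequalizer I := by
  induction S using Finite.induction_empty_option with
  | of_equiv e ih => have := ih (I.comapStar e); exact ⟨_, isColimitStarEquivCofork I e⟩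
  | h_empty => exact ⟨_, isColimitStarEmpty I⟩
  | h_option ih => have := ih (I.comapStar some); exact ⟨_, isColimitStarOptionCofork I⟩

end MultispanIndex

end CategoryTheory.Limits

section

variable {D : Type u} [Category.{v} D]

namespace TwHom

@[simp]
lemma id_map (X : TwObj D) (i : X.ι) : (𝟙 X : X ⟶ X).map i = 𝟙 _ := rfl

@[simp]
lemma comp_toFun {X Y Z : TwObj D} (F : X ⟶ Y) (H : Y ⟶ Z) (i : X.ι) :
    (F ≫ H).toFun i = H.toFun (F.toFun i) := rfl

@[simp]
lemma comp_map {X Y Z : TwObj D} (F : X ⟶ Y) (H : Y ⟶ Z) (i : X.ι) :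
    (F ≫ H).map i = F.map i ≫ H.map (F.toFun i) := rfl

lemma ext_eqToHom {X Y : TwObj D} {F H : X ⟶ Y} (h : ∀ i, F.toFun i = H.toFun i)
    (hmap : ∀ i, F.map i = H.map i ≫ eqToHom (congrArg Y.obj (h i)).symm) : F = H := by
  obtain ⟨F, Fmap⟩ := F
  obtain ⟨H, Hmap⟩ := H
  obtain rfl : F = H := funext h
  exact TwHom.hext rfl (heq_of_eq (funext fun i => by simpa using hmap i))

lemma map_eqToHom_of_eq {X Y : TwObj D} {F H : X ⟶ Y} (h : F = H) (i : X.ι) :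
    F.map i = H.map i ≫ eqToHom (congrArg (fun F : X ⟶ Y => Y.obj (F.toFun i)) h).symm := by
  subst h
  simp

end TwHom

def TwObj.reindexIso (X : TwObj D) {I : Type} [Finite I] (e : I ≃ X.ι) :
    (⟨I, X.obj ∘ e⟩ : TwObj D) ≅ X where
  hom := ⟨e, fun _ => 𝟙 _⟩
  inv := ⟨e.symm, fun j => eqToHom (by simp)⟩
  hom_inv_id := TwHom.ext_eqToHom (fun i => e.symm_apply_apply i) (by simp)
  inv_hom_id := TwHom.ext_eqToHom (fun j => e.apply_symm_apply j) (by simp)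

def TwHom.inl {A : TwObj D} {R : Type} [Finite R] {b : A.ι ⊕ R → D}
    (u : ∀ i, A.obj i ⟶ b (.inl i)) : A ⟶ ⟨A.ι ⊕ R, b⟩ :=
  ⟨Sum.inl, u⟩

namespace TwPushout

variable {A C : TwObj D} {R : Type} [Finite R] {b : A.ι ⊕ R → D}
  {u : ∀ i, A.obj i ⟶ b (.inl i)} {g : A ⟶ C}
  {X : TwObj D} {h₁ : C ⟶ X} {h₂ : (⟨A.ι ⊕ R, b⟩ : TwObj D) ⟶ X}

lemma toFun_inl_eq (w : g ≫ h₁ = TwHom.inl u ≫ h₂) (i : A.ι) :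
    h₂.toFun (.inl i) = h₁.toFun (g.toFun i) :=
  (congrArg (fun F : A ⟶ X => F.toFun i) w).symm

lemma map_comp_map_eq (w : g ≫ h₁ = TwHom.inl u ≫ h₂) (i : A.ι) :
    g.map i ≫ h₁.map (g.toFun i) =
      u i ≫ h₂.map (.inl i) ≫ eqToHom (congrArg X.obj (toFun_inl_eq w i)) :=
  (TwHom.map_eqToHom_of_eq w i).trans (Category.assoc _ _ _)

variable (u g)

@[simps]
def fibreIndex (k : C.ι) : MultispanIndex (.star {i // g.toFun i = k}) D where
  left i := A.obj i
  right
    | none => C.obj k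
    | some i => b (.inl i.1)
  fst i := g.map i ≫ eqToHom (congrArg C.obj i.2)
  snd i := u i

variable [HasPushouts D]

instance (k : C.ι) : HasMulticoequalizer (fibreIndex u g k) :=
  MultispanIndex.hasMulticoequalizer_star _

noncomputable def pt : TwObj D :=
  ⟨C.ι ⊕ R, Sum.elim (fun k => multicoequalizer (fibreIndex u g k)) (fun r => b (.inr r))⟩

noncomputable def inl : C ⟶ pt u g :=
  ⟨Sum.inl, fun k => Multicoequalizer.π (fibreIndex u g k) none⟩

noncomputable def inr : (⟨A.ι ⊕ R, b⟩ : TwObj D) ⟶ pt u g :=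
  ⟨Sum.map g.toFun id, fun
    | .inl i => Multicoequalizer.π (fibreIndex u g (g.toFun i)) (some ⟨i, rfl⟩)
    | .inr _ => 𝟙 _⟩

lemma condition : g ≫ inl u g = TwHom.inl u ≫ inr u g :=
  TwHom.hext rfl (heq_of_eq (funext fun i => by
    have h := Multicoequalizer.condition (fibreIndex u g (g.toFun i)) ⟨i, rfl⟩
    simp only [fibreIndex_fst, fibreIndex_snd, eqToHom_refl, Category.comp_id] at h
    exact h))

variable {u g}

noncomputable def descπ (w : g ≫ h₁ = TwHom.inl u ≫ h₂) (k : C.ι) :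
    ∀ o, (fibreIndex u g k).right o ⟶ X.obj (h₁.toFun k)
  | none => h₁.map k
  | some i => h₂.map (.inl i.1) ≫
      eqToHom (congrArg X.obj ((toFun_inl_eq w i.1).trans (congrArg h₁.toFun i.2)))

noncomputable def desc (w : g ≫ h₁ = TwHom.inl u ≫ h₂) : pt u g ⟶ X where
  toFun := Sum.elim h₁.toFun fun r => h₂.toFun (.inr r)
  map
    | .inl k => Multicoequalizer.desc _ _ (descπ w k) <| by
        rintro ⟨i, rfl⟩
        simp only [fibreIndex_fst, fibreIndex_snd, eqToHom_refl, Category.comp_id]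
        exact map_comp_map_eq w i
    | .inr r => h₂.map (.inr r)

lemma inl_desc (w : g ≫ h₁ = TwHom.inl u ≫ h₂) : inl u g ≫ desc w = h₁ :=
  TwHom.hext rfl (heq_of_eq (funext fun _ => Multicoequalizer.π_desc ..))

lemma inr_desc (w : g ≫ h₁ = TwHom.inl u ≫ h₂) : inr u g ≫ desc w = h₂ := by
  refine TwHom.ext_eqToHom (fun | .inl i => (toFun_inl_eq w i).symm | .inr _ => rfl) ?_
  rintro (i | r)
  · exact Multicoequalizer.π_desc _ _ _ _ _
  · dsimp [inr, desc, pt]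
    simp

lemma hom_ext {m₁ m₂ : pt u g ⟶ X} (hl : inl u g ≫ m₁ = inl u g ≫ m₂)
    (hr : inr u g ≫ m₁ = inr u g ≫ m₂) : m₁ = m₂ := by
  have hlFun k := congrArg (fun F : C ⟶ X => F.toFun k) hl
  have hrFun j := congrArg (fun F : _ ⟶ X => F.toFun j) hr
  refine TwHom.ext_eqToHom (fun | .inl k => hlFun k | .inr r => hrFun (.inr r)) ?_
  rintro (k | r)
  · refine Multicoequalizer.hom_ext _ _ _ fun o => ?_
    rcases o with _ | ⟨i, rfl⟩
    · exact (TwHom.map_eqToHom_of_eq hl k).trans (Category.assoc _ _ _)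
    · exact (TwHom.map_eqToHom_of_eq hr (.inl i)).trans (Category.assoc _ _ _)
  · exact (Category.id_comp _).symm.trans ((TwHom.map_eqToHom_of_eq hr (.inr r)).trans
      (congrArg (· ≫ eqToHom _) (Category.id_comp _)))

variable (u g) in
noncomputable def isColimit : IsColimit (PushoutCocone.mk _ _ (condition u g)) :=
  PushoutCocone.IsColimit.mk _ (fun s => desc s.condition) (fun s => inl_desc s.condition)
    (fun s => inr_desc s.condition) fun s _ hl hr =>
      hom_ext (hl.trans (inl_desc s.condition).symm) (hr.trans (inr_desc s.condition).symm)

end TwPushout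

theorem TwHom.hasPushout_inl [HasPushouts D] {A C : TwObj D} {R : Type} [Finite R]
    {b : A.ι ⊕ R → D} (u : ∀ i, A.obj i ⟶ b (.inl i)) (g : A ⟶ C) :
    HasPushout g (TwHom.inl u) :=
  ⟨⟨⟨_, TwPushout.isColimit u g⟩⟩⟩

end

/-- If `D` has all pushouts, then any span `C ← A → B` in `Tw(D)` in which the morphism
`A → B` has an injective underlying function of index sets has a pushout in `Tw(D)`. -/
theorem tw_hasPushout_of_injective (D : Type u) [Category.{v} D] [HasPushouts D]
    (A B C : TwObj D) (f : A ⟶ B) (g : A ⟶ C)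
    (hf : Function.Injective (TwHom.toFun f)) :
    HasPushout g f := by
  classical
  let e : A.ι ⊕ {j // j ∉ Set.range f.toFun} ≃ B.ι :=
    (Equiv.sumCongr (Equiv.ofInjective _ hf) (Equiv.refl _)).trans (Equiv.sumCompl _)
  have hfactor : f = TwHom.inl (b := B.obj ∘ e) f.map ≫ (B.reindexIso e).hom :=
    TwHom.hext rfl (heq_of_eq (funext fun _ => (Category.comp_id _).symm))
  have := TwHom.hasPushout_inl (b := B.obj ∘ e) f.map g
  have := hasPushout_of_right_iso (pushout.inr g (TwHom.inl (b := B.obj ∘ e) f.map))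
    (B.reindexIso e).hom
  rw [hfactor]
  infer_instance
end

section
/- Let D be a category, d an object of D, and n a natural number. Then the automorphism group of the object (Fin n, fun _ => d) in the Grothendieck twist Tw(D) is isomorphic, as a group, to the semidirect product (Fin n → Aut d) ⋊ Equiv.Perm (Fin n), where a permutation σ acts on a tuple g : Fin n → Aut d by (σ • g) i = g (σ⁻¹ i) (that is, the wreath product (Aut d) ≀ Σ_n). -/
open CategoryTheory CategoryTheory.Limits

universe v u

/-- The action of the symmetric group `Σ_n` on `n`-tuples of elements of a group `G`,
where `(σ • g) i = g (σ⁻¹ i)`. -/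
def permWreathAction (n : ℕ) (G : Type*) [Group G] :
    Equiv.Perm (Fin n) →* MulAut (Fin n → G) where
  toFun σ :=
    { toFun := fun g i => g (σ⁻¹ i)
      invFun := fun g i => g (σ i)
      left_inv := fun g => by funext i; simp
      right_inv := fun g => by funext i; simp
      map_mul' := fun g h => rfl }
  map_one' := by
    ext g i
    simp
  map_mul' := fun σ τ => by
    ext g i
    simp [Equiv.Perm.mul_apply]

section Aux

variable {D : Type u} [Category.{v} D] (d : D) (n : ℕ)

/-- The constant object. -/
abbrev Xc : TwObj D := TwObj.mk (Fin n) (fun _ => d)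

def mapc (f : Xc d n ⟶ Xc d n) : Fin n → (d ⟶ d) := f.map

lemma hom_inv_map (α : Aut (Xc d n)) (i : Fin n) :
    α.hom.map i ≫ α.inv.map (α.hom.toFun i) = 𝟙 d :=
  congrFun (congrArg (mapc d n) α.hom_inv_id) i

lemma inv_hom_map (α : Aut (Xc d n)) (i : Fin n) :
    α.inv.map i ≫ α.hom.map (α.inv.toFun i) = 𝟙 d :=
  congrFun (congrArg (mapc d n) α.inv_hom_id) i

/-- Underlying permutation of an automorphism of the constant object. -/
def permOf (α : Aut (Xc d n)) : Equiv.Perm (Fin n) where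
  toFun := α.hom.toFun
  invFun := α.inv.toFun
  left_inv i := congrFun (congrArg TwHom.toFun α.hom_inv_id) i
  right_inv i := congrFun (congrArg TwHom.toFun α.inv_hom_id) i

/-- Componentwise automorphisms of `d` extracted from an automorphism of the constant object. -/
def autOf (α : Aut (Xc d n)) (i : Fin n) : Aut d where
  hom := α.hom.map ((permOf d n α).symm i)
  inv := α.inv.map i
  hom_inv_id := by
    have h := hom_inv_map d n α ((permOf d n α).symm i)
    rwa [show α.hom.toFun ((permOf d n α).symm i) = i from (permOf d n α).apply_symm_apply i] at h
  inv_hom_id := inv_hom_map d n α i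

/-- Build an automorphism of the constant object from a tuple and a permutation. -/
def bwd (g : Fin n → Aut d) (σ : Equiv.Perm (Fin n)) : Aut (Xc d n) where
  hom := ⟨σ, fun i => (g (σ i)).hom⟩
  inv := ⟨σ.symm, fun i => (g i).inv⟩
  hom_inv_id := TwHom.hext (funext fun i => σ.symm_apply_apply i)
    (heq_of_eq (funext fun i => (g (σ i)).hom_inv_id))
  inv_hom_id := TwHom.hext (funext fun i => σ.apply_symm_apply i)
    (heq_of_eq (funext fun i => by
      show (g i).inv ≫ (g (σ (σ.symm i))).hom = 𝟙 d
      rw [Equiv.apply_symm_apply]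
      exact (g i).inv_hom_id))

end Aux

/-- The automorphism group of the constant family `(Fin n, fun _ => d)` in `Tw(D)` is the
wreath product `(Aut d) ≀ Σ_n`, i.e. the semidirect product
`(Fin n → Aut d) ⋊ Equiv.Perm (Fin n)` for the action `(σ • g) i = g (σ⁻¹ i)`. -/
theorem tw_aut_constant_iso_wreath (D : Type u) [Category.{v} D] (d : D) (n : ℕ) :
    Nonempty
      (Aut (TwObj.mk (D := D) (Fin n) (fun _ => d)) ≃*
        SemidirectProduct (Fin n → Aut d) (Equiv.Perm (Fin n))
          (permWreathAction n (Aut d))) := by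
  refine ⟨{
    toFun := fun α => ⟨autOf d n α, permOf d n α⟩
    invFun := fun p => bwd d n p.left p.right
    left_inv := fun α => Iso.ext (TwHom.hext rfl (heq_of_eq (funext fun i => by
      show α.hom.map ((permOf d n α).symm ((permOf d n α) i)) = α.hom.map i
      rw [Equiv.symm_apply_apply])))
    right_inv := fun p => by
      rcases p with ⟨g, σ⟩
      refine SemidirectProduct.ext ?_ ?_
      · funext i
        refine Iso.ext ?_
        show (g (σ (σ.symm i))).hom = (g i).hom
        rw [Equiv.apply_symm_apply]
      · exact Equiv.ext fun i => rfl
    map_mul' := fun α β => by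
      refine SemidirectProduct.ext ?_ ?_
      · funext i
        refine Iso.ext ?_
        show β.hom.map ((permOf d n β).symm ((permOf d n α).symm i)) ≫
            α.hom.map (β.hom.toFun ((permOf d n β).symm ((permOf d n α).symm i))) =
          β.hom.map ((permOf d n β).symm ((permOf d n α).symm i)) ≫
            α.hom.map ((permOf d n α).symm i)
        rw [show β.hom.toFun ((permOf d n β).symm ((permOf d n α).symm i)) =
            (permOf d n α).symm i from (permOf d n β).apply_symm_apply _]
      · exact Equiv.ext fun i => rfl }⟩
end

section
/- Let D be a category, and let f : (I, a) → (J, b) be a morphism in the Grothendieck twist Tw(D) with underlying function f : I → J. For each j ∈ J let f_j : (f⁻¹(j), a restricted to f⁻¹(j)) → (PUnit, fun _ => b j) denote the restriction of f, with underlying function the unique function to PUnit and components the F_i for i ∈ f⁻¹(j). Then, under the canonical isomorphisms (I, a) ≅ ∐_{j ∈ J} (f⁻¹(j), a|_{f⁻¹(j)}) and (J, b) ≅ ∐_{j ∈ J} (PUnit, fun _ => b j), the morphism f corresponds to the coproduct ∐_{j ∈ J} f_j of the restrictions. -/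
open CategoryTheory CategoryTheory.Limits

universe v u

variable {D : Type u} [Category.{v} D]

/-- The fiber of a morphism `f : (I,a) → (J,b)` of `Tw(D)` over `j ∈ J`: the restriction
of the family `a` to the preimage `f⁻¹(j)`. -/
def twFiber {X Y : TwObj D} (f : X ⟶ Y) (j : Y.ι) : TwObj D where
  ι := {i : X.ι // TwHom.toFun (X := X) (Y := Y) f i = j}
  obj i := X.obj i.1

/-- The singleton object `(PUnit, fun _ => b j)`. -/
def twSingleton {Y : TwObj D} (j : Y.ι) : TwObj D where
  ι := PUnit
  obj := fun _ => Y.obj j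

/-- The canonical inclusion of the fiber over `j` into the domain. -/
def twFiberIncl {X Y : TwObj D} (f : X ⟶ Y) (j : Y.ι) : twFiber f j ⟶ X where
  toFun := Subtype.val
  map i := 𝟙 (X.obj i.1)

/-- The canonical inclusion of the singleton on `b j` into `(J, b)`. -/
def twSingletonIncl {Y : TwObj D} (j : Y.ι) : twSingleton (D := D) j ⟶ Y where
  toFun := fun _ => j
  map := fun _ => 𝟙 (Y.obj j)

/-- The restriction `f_j : (f⁻¹(j), a|) → (PUnit, b j)` of `f` to the fiber over `j`. -/
def twRestrict {X Y : TwObj D} (f : X ⟶ Y) (j : Y.ι) : twFiber f j ⟶ twSingleton j where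
  toFun := fun _ => PUnit.unit
  map i := TwHom.map (X := X) (Y := Y) f i.1 ≫ eqToHom (congrArg Y.obj i.2)

theorem TwHom.ext' {X Y : TwObj D} {f g : TwHom X Y}
    (h1 : ∀ i, f.toFun i = g.toFun i) (h2 : ∀ i, HEq (f.map i) (g.map i)) : f = g := by
  obtain ⟨f1, f2⟩ := f; obtain ⟨g1, g2⟩ := g
  obtain rfl : f1 = g1 := funext h1
  obtain rfl : f2 = g2 := funext fun i => eq_of_heq (h2 i)
  rfl

/-- A morphism `f : (I,a) → (J,b)` of `Tw(D)` is the coproduct, over `j ∈ J`, of its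
restrictions `f_j : (f⁻¹(j), a|) → (PUnit, b j)`: the canonical cofans on `(I,a)` and
`(J,b)` are colimits (so `(I,a) ≅ ∐_j (f⁻¹(j), a|)` and `(J,b) ≅ ∐_j (PUnit, b j)`
canonically), and under these identifications `f` commutes with the maps `f_j`. -/
theorem tw_hom_is_coproduct_of_restrictions {X Y : TwObj D} (f : X ⟶ Y) :
    Nonempty (IsColimit (Cofan.mk X (twFiberIncl f))) ∧
    Nonempty (IsColimit (Cofan.mk Y (fun j : Y.ι => twSingletonIncl (D := D) j))) ∧
    ∀ j : Y.ι, twFiberIncl f j ≫ f = twRestrict f j ≫ twSingletonIncl j := by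
  refine ⟨⟨mkCofanColimit _ (fun t => ⟨fun i => (t.inj (f.toFun i)).toFun ⟨i, rfl⟩,
      fun i => (t.inj (f.toFun i)).map ⟨i, rfl⟩⟩) ?_ ?_⟩,
    ⟨mkCofanColimit _ (fun t => ⟨fun j => (t.inj j).toFun PUnit.unit,
      fun j => (t.inj j).map PUnit.unit⟩) ?_ ?_⟩, ?_⟩
  · intro t j
    refine TwHom.ext' (fun i => ?_) (fun i => ?_)
    · obtain ⟨i, rfl⟩ := i; rfl
    · obtain ⟨i, rfl⟩ := i
      exact heq_of_eq (Category.id_comp _)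
  · intro t m hm
    refine TwHom.ext' (fun i => ?_) (fun i => ?_)
    · exact congrArg (fun φ : TwHom (twFiber f (f.toFun i)) t.pt => φ.toFun ⟨i, rfl⟩)
        (hm (f.toFun i))
    · have h2 : HEq (((Cofan.mk X (twFiberIncl f)).inj (f.toFun i) ≫ m).map ⟨i, rfl⟩)
          ((t.inj (f.toFun i)).map ⟨i, rfl⟩) := by rw [hm]
      exact (heq_of_eq (Category.id_comp (m.map i)).symm).trans h2
  · intro t j
    refine TwHom.ext' (fun u => ?_) (fun u => ?_)
    · cases u; rfl
    · cases u; exact heq_of_eq (Category.id_comp _)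
  · intro t m hm
    refine TwHom.ext' (fun j => ?_) (fun j => ?_)
    · exact congrArg (fun φ : TwHom (twSingleton j) t.pt => φ.toFun PUnit.unit) (hm j)
    · have h2 : HEq ((((Cofan.mk Y fun j => twSingletonIncl (D := D) j)).inj j ≫ m).map
          PUnit.unit) ((t.inj j).map PUnit.unit) := by rw [hm]
      exact (heq_of_eq (Category.id_comp (m.map j)).symm).trans h2
  · intro j
    refine TwHom.ext' (fun i => i.2) (fun i => ?_)
    obtain ⟨i, rfl⟩ := i
    refine heq_of_eq ?_
    show 𝟙 (X.obj i) ≫ f.map i = (f.map i ≫ eqToHom rfl) ≫ 𝟙 _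
    simp
end

section
/- Let X = EuclideanSpace ℝ (Fin n), let G be a subgroup of the isometry group of X, and let H be a normal subgroup of G. Then the scissors congruence group P(X, G) is isomorphic to the coinvariants of the induced action of the quotient group G/H on P(X, H); that is, P(X, G) ≅ H_0(G/H, P(X, H)), the quotient of P(X, H) by the subgroup generated by all elements x - gH • x for x ∈ P(X, H) and gH ∈ G/H, where the action of G/H on P(X, H) is the well-defined action induced by g • [P] = [g · P]. -/
open MeasureTheory

/-- `n`-dimensional Euclidean space. -/
abbrev Euc (n : ℕ) : Type := EuclideanSpace ℝ (Fin n)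

/-- A simplex in `Euc n` is the convex hull of `n+1` points. -/
def IsSimplex {n : ℕ} (s : Set (Euc n)) : Prop :=
  ∃ v : Fin (n + 1) → Euc n, s = convexHull ℝ (Set.range v)

/-- A polytope in `Euc n` is a finite union of simplices. -/
def IsPolytope {n : ℕ} (s : Set (Euc n)) : Prop :=
  ∃ (k : ℕ) (t : Fin k → Set (Euc n)), (∀ i, IsSimplex (t i)) ∧ s = ⋃ i, t i

/-- The type of polytopes of `Euc n`. -/
def Polytope (n : ℕ) : Type := {s : Set (Euc n) // IsPolytope s}

/-- The subgroup of relations defining the scissors congruence group `P(X, G)`: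
it is generated by the elements `[P] - [g ⬝ P]` for polytopes `P` and `g ∈ G`, and the
elements `[P ∪ P'] - [P] - [P']` for polytopes `P, P'` whose intersection has measure
zero. -/
def scissorsRelations (n : ℕ) (G : Subgroup (Euc n ≃ᵢ Euc n)) :
    AddSubgroup (FreeAbelianGroup (Polytope n)) :=
  AddSubgroup.closure
    ({x | ∃ (P P' : Polytope n) (g : Euc n ≃ᵢ Euc n), g ∈ G ∧ P'.1 = g '' P.1 ∧
        x = FreeAbelianGroup.of P - FreeAbelianGroup.of P'} ∪
      {x | ∃ P P' Q : Polytope n, Q.1 = P.1 ∪ P'.1 ∧ volume (P.1 ∩ P'.1) = 0 ∧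
        x = FreeAbelianGroup.of Q - FreeAbelianGroup.of P - FreeAbelianGroup.of P'})

/-- The scissors congruence group `P(Euc n, G)`: the free abelian group on the polytopes
of `Euc n`, modulo the relations `[P] = [g ⬝ P]` for `g ∈ G` and `[P ∪ P'] = [P] + [P']`
for polytopes intersecting in measure zero. -/
def SCGroup (n : ℕ) (G : Subgroup (Euc n ≃ᵢ Euc n)) : Type :=
  FreeAbelianGroup (Polytope n) ⧸ scissorsRelations n G

noncomputable instance (n : ℕ) (G : Subgroup (Euc n ≃ᵢ Euc n)) :
    AddCommGroup (SCGroup n G) :=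
  inferInstanceAs (AddCommGroup (FreeAbelianGroup (Polytope n) ⧸ scissorsRelations n G))

/-- The class of a polytope in the scissors congruence group. -/
def SCGroup.mk {n : ℕ} {G : Subgroup (Euc n ≃ᵢ Euc n)} (P : Polytope n) : SCGroup n G :=
  QuotientAddGroup.mk (FreeAbelianGroup.of P)

/-!
Normality of `H` makes every `g ∈ G` normalize `H`, so `g` maps `H`-relations to `H`-relations
and acts on `P(X, H)`; elements of `H` act trivially, so the action descends to `G ⧸ H`. The
inclusion `H ≤ G` induces a surjection `π : P(X, H) → P(X, G)` whose kernel is the image of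
the `G`-relations. Additivity relations already vanish in `P(X, H)`, and the image of
`[P] - [g ⬝ P]` is `y - gH • y` with `y = [P]`; conversely `π` is `G`-invariant, so it kills
every `y - gH • y`. Hence `ker π` is the kernel of the projection onto the coinvariants.
-/

variable {n : ℕ}

theorem IsSimplex.image_affineMap (f : Euc n →ᵃ[ℝ] Euc n) {s : Set (Euc n)}
    (hs : IsSimplex s) : IsSimplex (f '' s) := by
  obtain ⟨v, rfl⟩ := hs
  exact ⟨f ∘ v, by rw [f.image_convexHull, ← Set.range_comp]⟩

theorem IsPolytope.image_affineMap (f : Euc n →ᵃ[ℝ] Euc n) {s : Set (Euc n)}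
    (hs : IsPolytope s) : IsPolytope (f '' s) := by
  obtain ⟨k, t, ht, rfl⟩ := hs
  exact ⟨k, fun i => f '' t i, fun i => (ht i).image_affineMap f, Set.image_iUnion⟩

theorem Isometry.volume_image {f : Euc n → Euc n} (hf : Isometry f) (s : Set (Euc n)) :
    volume (f '' s) = volume s := by
  rw [← EuclideanSpace.euclideanHausdorffMeasure_eq_volume]
  exact hf.euclideanHausdorffMeasure_image s

namespace Polytope

instance : MulAction (Euc n ≃ᵢ Euc n) (Polytope n) where
  smul g P := ⟨g '' P.1, P.2.image_affineMap g.toRealAffineIsometryEquiv.toAffineMap⟩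
  one_smul P := Subtype.ext (Set.image_id P.1)
  mul_smul g g' P := Subtype.ext (Set.image_comp g g' P.1)

theorem val_smul (g : Euc n ≃ᵢ Euc n) (P : Polytope n) : (g • P).1 = g '' P.1 := rfl

end Polytope

section scissorsRelations

variable {K K' : Subgroup (Euc n ≃ᵢ Euc n)}

theorem of_sub_of_smul_mem_scissorsRelations {g : Euc n ≃ᵢ Euc n} (hg : g ∈ K)
    (P : Polytope n) :
    FreeAbelianGroup.of P - FreeAbelianGroup.of (g • P) ∈ scissorsRelations n K :=
  AddSubgroup.subset_closure (Or.inl ⟨P, g • P, g, hg, rfl, rfl⟩)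

theorem scissorsRelations_mono (h : K ≤ K') : scissorsRelations n K ≤ scissorsRelations n K' :=
  AddSubgroup.closure_mono <| Set.union_subset_union_left _
    fun _ ⟨P, P', g, hg, hP', hx⟩ => ⟨P, P', g, h hg, hP', hx⟩

/-- `g ⬝ (h ⬝ P) = (g h g⁻¹) ⬝ (g ⬝ P)` with `g h g⁻¹ ∈ K`, and `g` preserves volume. -/
theorem scissorsRelations_le_comap_map_smul {g : Euc n ≃ᵢ Euc n}
    (hg : g ∈ Subgroup.normalizer (K : Set _)) :
    scissorsRelations n K ≤ (scissorsRelations n K).comap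
      (FreeAbelianGroup.map (g • · : Polytope n → Polytope n)) := by
  refine (AddSubgroup.closure_le _).mpr ?_
  rintro _ (⟨P, P', h, hh, hP', rfl⟩ | ⟨P, P', Q, hQ, hvol, rfl⟩)
  · have hP' : g • P' = (g * h * g⁻¹) • g • P := by
      rw [smul_smul, inv_mul_cancel_right, mul_smul, (Subtype.ext hP' : P' = h • P)]
    simpa [hP'] using
      of_sub_of_smul_mem_scissorsRelations ((Subgroup.mem_normalizer_iff.mp hg h).mp hh) (g • P)
  · refine AddSubgroup.subset_closure (Or.inr ⟨g • P, g • P', g • Q, ?_, ?_, by simp⟩)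
    · simp only [Polytope.val_smul, hQ, Set.image_union]
    · rw [Polytope.val_smul, Polytope.val_smul, ← Set.image_inter g.injective,
        g.isometry.volume_image, hvol]

end scissorsRelations

namespace SCGroup

variable {K K' : Subgroup (Euc n ≃ᵢ Euc n)}

theorem hom_ext {A : Type*} [AddCommGroup A] {f f' : SCGroup n K →+ A}
    (h : ∀ P : Polytope n, f (mk P) = f' (mk P)) : f = f' :=
  QuotientAddGroup.addMonoidHom_ext _ (FreeAbelianGroup.lift_ext _ _ h)

theorem mk_smul {g : Euc n ≃ᵢ Euc n} (hg : g ∈ K) (P : Polytope n) :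
    (mk (g • P) : SCGroup n K) = mk P :=
  (QuotientAddGroup.eq_iff_sub_mem.mpr (of_sub_of_smul_mem_scissorsRelations hg P)).symm

noncomputable def mapOfLE (h : K ≤ K') : SCGroup n K →+ SCGroup n K' :=
  QuotientAddGroup.map _ _ (AddMonoidHom.id _)
    ((scissorsRelations_mono h).trans_eq (AddSubgroup.comap_id _).symm)

theorem mapOfLE_surjective (h : K ≤ K') : Function.Surjective (mapOfLE h) := by
  rintro ⟨x⟩
  exact ⟨QuotientAddGroup.mk x, rfl⟩

theorem ker_mapOfLE (h : K ≤ K') :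
    (mapOfLE h).ker = (scissorsRelations n K').map (QuotientAddGroup.mk' _) :=
  (QuotientAddGroup.ker_map _ _ _ _).trans (congrArg _ (AddSubgroup.comap_id _))

variable (K) in
noncomputable def normalizerAction :
    Subgroup.normalizer (K : Set (Euc n ≃ᵢ Euc n)) →* AddMonoid.End (SCGroup n K) where
  toFun g := QuotientAddGroup.map _ _ _ (scissorsRelations_le_comap_map_smul g.2)
  map_one' := hom_ext fun P => congrArg mk (one_smul _ P)
  map_mul' _ _ := hom_ext fun P => congrArg mk (mul_smul _ _ P)

theorem normalizerAction_eq_one {g : Subgroup.normalizer (K : Set (Euc n ≃ᵢ Euc n))}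
    (hg : (g : Euc n ≃ᵢ Euc n) ∈ K) :
    normalizerAction K g = 1 :=
  hom_ext fun P => mk_smul hg P

theorem mapOfLE_comp_normalizerAction (h : K ≤ K')
    {g : Subgroup.normalizer (K : Set (Euc n ≃ᵢ Euc n))}
    (hg : (g : Euc n ≃ᵢ Euc n) ∈ K') :
    (mapOfLE h).comp (normalizerAction K g) = mapOfLE h :=
  hom_ext fun P => mk_smul hg P

end SCGroup

theorem Subgroup.le_normalizer_map_subtype {Γ : Type*} [Group Γ] (G : Subgroup Γ)
    (H : Subgroup G) [H.Normal] : G ≤ Subgroup.normalizer (H.map G.subtype : Set Γ) :=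
  calc G = (⊤ : Subgroup G).map G.subtype := by
        rw [← MonoidHom.range_eq_map, Subgroup.range_subtype]
    _ = (Subgroup.normalizer (H : Set G)).map G.subtype := by rw [Subgroup.normalizer_eq_top]
    _ ≤ _ := Subgroup.le_normalizer_map _

/-- The kernel of the projection onto the coinvariants `H₀(Q, A)`. -/
def coinvariantsKer (Q A : Type*) [Group Q] [AddCommGroup A] [DistribMulAction Q A] :
    AddSubgroup A :=
  AddSubgroup.closure {x | ∃ (q : Q) (y : A), x = y - q • y}

theorem coinvariantsKer_le_ker {Q A B : Type*} [Group Q] [AddCommGroup A] [AddCommGroup B]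
    [DistribMulAction Q A] {f : A →+ B} (hf : ∀ (q : Q) (y : A), f (q • y) = f y) :
    coinvariantsKer Q A ≤ f.ker := by
  refine (AddSubgroup.closure_le _).mpr ?_
  rintro _ ⟨q, y, rfl⟩
  rw [SetLike.mem_coe, AddMonoidHom.mem_ker, map_sub, hf, sub_self]

namespace SCGroup

variable (G : Subgroup (Euc n ≃ᵢ Euc n)) (H : Subgroup G) [H.Normal]

noncomputable def quotientAction : G ⧸ H →* AddMonoid.End (SCGroup n (H.map G.subtype)) :=
  QuotientGroup.lift H
    ((normalizerAction _).comp (Subgroup.inclusion (Subgroup.le_normalizer_map_subtype G H)))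
    fun h hh => normalizerAction_eq_one ⟨h, hh, rfl⟩

noncomputable instance : DistribMulAction (G ⧸ H) (SCGroup n (H.map G.subtype)) :=
  DistribMulAction.compHom _ (quotientAction G H)

theorem mk_smul_mk (g : G) (P : Polytope n) :
    (g : G ⧸ H) • (mk P : SCGroup n (H.map G.subtype)) = mk ((g : Euc n ≃ᵢ Euc n) • P) :=
  rfl

theorem ker_mapOfLE_eq_coinvariantsKer :
    (mapOfLE (Subgroup.map_subtype_le H)).ker =
      coinvariantsKer (G ⧸ H) (SCGroup n (H.map G.subtype)) := by
  apply le_antisymm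
  · refine (ker_mapOfLE _).trans_le
      (AddSubgroup.map_le_iff_le_comap.mpr ((AddSubgroup.closure_le _).mpr ?_))
    rintro _ (⟨P, P', g, hg, hP', rfl⟩ | ⟨P, P', Q, hQ, hvol, rfl⟩)
    · obtain rfl : P' = (⟨g, hg⟩ : G) • P := Subtype.ext hP'
      exact AddSubgroup.subset_closure ⟨(⟨g, hg⟩ : G), mk P, rfl⟩
    · have hzero : (QuotientAddGroup.mk (FreeAbelianGroup.of Q - FreeAbelianGroup.of P -
          FreeAbelianGroup.of P') : SCGroup n (H.map G.subtype)) = 0 :=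
        (QuotientAddGroup.eq_zero_iff _).mpr
          (AddSubgroup.subset_closure (Or.inr ⟨P, P', Q, hQ, hvol, rfl⟩))
      exact (hzero.symm ▸ zero_mem _ :
        _ ∈ coinvariantsKer (G ⧸ H) (SCGroup n (H.map G.subtype)))
  · refine coinvariantsKer_le_ker fun q y => ?_
    induction q using QuotientGroup.induction_on with
    | H g =>
      exact (DFunLike.congr_fun (mapOfLE_comp_normalizerAction (Subgroup.map_subtype_le H)
        (g := Subgroup.inclusion (Subgroup.le_normalizer_map_subtype G H) g) g.2) y)

end SCGroup

/-- For a normal subgroup `H` of `G`, the action of the quotient group `G/H` on polytopes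
descends to a well-defined action of `G/H` on the scissors congruence group `P(X, H)`,
induced by `g • [P] = [g ⬝ P]`, and `P(X, G)` is isomorphic to the coinvariants
`H₀(G/H, P(X, H))`, i.e. the quotient of `P(X, H)` by the subgroup generated by all
`x - gH • x`. -/
theorem scGroup_iso_coinvariants_of_normal (n : ℕ) (G : Subgroup (Euc n ≃ᵢ Euc n))
    (H : Subgroup G) [H.Normal] :
    ∃ act : G ⧸ H →* Multiplicative (AddAut (SCGroup n (H.map G.subtype))),
      (∀ (g : G) (P P' : Polytope n), P'.1 = (g : Euc n ≃ᵢ Euc n) '' P.1 →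
        Multiplicative.toAdd (act (QuotientGroup.mk g)) (SCGroup.mk P) = SCGroup.mk P') ∧
      Nonempty (SCGroup n G ≃+
        SCGroup n (H.map G.subtype) ⧸ AddSubgroup.closure
          {x : SCGroup n (H.map G.subtype) |
            ∃ (q : G ⧸ H) (y : SCGroup n (H.map G.subtype)), x = y - Multiplicative.toAdd (act q) y}) := by
  refine ⟨DistribMulAction.toAddAut (G ⧸ H) _, fun g P P' hP' => ?_, ⟨?_⟩⟩
  · exact (SCGroup.mk_smul_mk G H g P).trans (congrArg _ (Subtype.ext hP').symm)
  · exact ((QuotientAddGroup.quotientAddEquivOfEq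
      (SCGroup.ker_mapOfLE_eq_coinvariantsKer G H)).symm.trans
        (QuotientAddGroup.quotientKerEquivOfSurjective _ (SCGroup.mapOfLE_surjective _))).symm
end
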